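/- Let C ⊆ (ZMod (p^s))^n be a nonzero non-degenerate submodule of rank K. Then d_L(C) ≤ ⌊p/2⌋ · p^{s-1} · (n - K + 1). (Join-support Lee-metric Singleton bound.) -/

import Mathlib

/-- Lee weight of an element of `ZMod m`. -/
def leeWt (m : ℕ) (x : ZMod m) : ℕ := min x.val (m - x.val)

/-- Lee weight of a vector over `ZMod m`. -/
def leeWtVec (m n : ℕ) (x : Fin n → ZMod m) : ℕ := ∑ i, leeWt m (x i)

/-- The minimum Lee distance of a code. -/
noncomputable def minLeeDist (m n : ℕ) (D : Set (Fin n → ZMod m)) : ℕ :=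
  sInf {w : ℕ | ∃ c ∈ D, c ≠ 0 ∧ w = leeWtVec m n c}

/-- The rank of a code: the minimal cardinality of a generating set. -/
noncomputable def codeRank (p s n : ℕ) (C : Submodule (ZMod (p ^ s)) (Fin n → ZMod (p ^ s))) : ℕ :=
  sInf {m : ℕ | ∃ S : Finset (Fin n → ZMod (p ^ s)), S.card = m ∧
    Submodule.span (ZMod (p ^ s)) (S : Set (Fin n → ZMod (p ^ s))) = C}

/-!
Let `c₀` be a nonzero codeword of minimal Hamming weight `d`. Puncturing `d - 1` coordinates
is injective on `C`, and over a principal ideal ring every submodule of `R^t` is generated by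
`t` elements (induct on coordinates: the projection to one coordinate has a principal image),
so `K ≤ n - d + 1`. Some multiple `p^k • c₀` is a nonzero codeword killed by `p`, with support
inside that of `c₀`. An entry `x` of `ZMod (p^s)` with `p • x = 0` is a multiple `j p^(s-1)`
with `j < p`, so its Lee weight is at most `⌊p/2⌋ p^(s-1)`; summing over at most `d` entries
gives the bound.
-/

open Finset

instance ZMod.instIsPrincipalIdealRing (m : ℕ) : IsPrincipalIdealRing (ZMod m) :=
  IsPrincipalIdealRing.of_surjective (Int.castRingHom (ZMod m)) ZMod.intCast_surjective

theorem leeWt_zero (m : ℕ) : leeWt m 0 = 0 := by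
  simp [leeWt]

theorem leeWt_le_of_nsmul_eq_zero {m p q : ℕ} (hm : m = p * q) {x : ZMod m} (hx : p • x = 0) :
    leeWt m x ≤ p / 2 * q := by
  subst hm
  unfold leeWt
  rcases Nat.eq_zero_or_pos (p * q) with hpq | hpq
  · -- `m = 0`: truncated subtraction makes `leeWt 0 x = 0`
    exact (min_le_right _ _).trans (by omega)
  have : NeZero (p * q) := ⟨hpq.ne'⟩
  have hdvd : p * q ∣ p * x.val := by
    rw [← ZMod.natCast_eq_zero_iff, Nat.cast_mul, ZMod.natCast_val, ZMod.cast_id,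
      ← nsmul_eq_mul, hx]
  obtain ⟨k, hk⟩ := Nat.dvd_of_mul_dvd_mul_left (Nat.pos_of_mul_pos_right hpq) hdvd
  have hkp : k < p := by
    have := ZMod.val_lt x
    rw [hk, mul_comm p] at this
    exact Nat.lt_of_mul_lt_mul_left this
  rw [hk]
  rcases le_or_gt k (p / 2) with h | h
  · calc min (q * k) (p * q - q * k) ≤ q * k := min_le_left _ _
      _ ≤ p / 2 * q := by rw [mul_comm]; exact Nat.mul_le_mul_right q h
  · calc min (q * k) (p * q - q * k) ≤ p * q - q * k := min_le_right _ _
      _ = (p - k) * q := by rw [Nat.sub_mul, mul_comm q]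
      _ ≤ p / 2 * q := Nat.mul_le_mul_right q (by omega)

theorem leeWtVec_le_hammingNorm_mul {m n B : ℕ} {x : Fin n → ZMod m}
    (hx : ∀ i, leeWt m (x i) ≤ B) : leeWtVec m n x ≤ hammingNorm x * B := by
  have hsupp : ∀ i ∈ univ, leeWt m (x i) ≠ 0 → x i ≠ 0 := fun i _ h hi =>
    h (hi ▸ leeWt_zero m)
  calc leeWtVec m n x = ∑ i with x i ≠ 0, leeWt m (x i) := (sum_filter_of_ne hsupp).symm
    _ ≤ #{i | x i ≠ 0} • B := sum_le_card_nsmul _ _ _ fun i _ => hx i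
    _ = hammingNorm x * B := smul_eq_mul _ _

theorem exists_pow_nsmul_ne_zero_and_nsmul_eq_zero {M : Type*} [AddMonoid M] {p s : ℕ} {c : M}
    (hc : c ≠ 0) (h : p ^ s • c = 0) : ∃ k, p ^ k • c ≠ 0 ∧ p • p ^ k • c = 0 := by
  induction s generalizing c with
  | zero => exact absurd (by simpa using h) hc
  | succ s ih =>
    by_cases hpc : p • c = 0
    · exact ⟨0, by simpa using hc, by simpa using hpc⟩
    · obtain ⟨k, hk, hpk⟩ := ih hpc (by rwa [← mul_nsmul, ← pow_succ'])
      exact ⟨k + 1, by rwa [pow_succ', mul_nsmul], by rwa [pow_succ', mul_nsmul]⟩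

namespace Submodule

universe u

variable {R : Type*} {M : Type u} [CommRing R]

theorem eq_inf_ker_sup_of_map_le {M' : Type*} [AddCommGroup M] [Module R M] [AddCommGroup M']
    [Module R M'] (f : M →ₗ[R] M') {N P : Submodule R M} (hPN : P ≤ N)
    (h : N.map f ≤ P.map f) :
    N = N ⊓ LinearMap.ker f ⊔ P := by
  rw [sup_comm, inf_comm, ← sup_inf_assoc_of_le _ hPN]
  exact (inf_eq_right.2 ((LinearMap.map_le_map_iff f).1 h)).symm

theorem spanRank_map_eq_of_injOn {M' : Type u} [AddCommGroup M] [Module R M] [AddCommGroup M']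
    [Module R M'] (f : M →ₗ[R] M') {C : Submodule R M} (hf : Set.InjOn f C) :
    (C.map f).spanRank = C.spanRank := by
  have hinj : Function.Injective (f ∘ₗ C.subtype) := fun x y hxy => Subtype.ext (hf x.2 y.2 hxy)
  rw [← spanRank_top C, ← spanRank_map_eq_of_injective _ hinj, map_comp, map_subtype_top]

theorem spanRank_le_card_of_forall_notMem_eq_zero {ι : Type*} [IsPrincipalIdealRing R]
    (s : Finset ι) {N : Submodule R (ι → R)} (hN : ∀ x ∈ N, ∀ i ∉ s, x i = 0) :
    N.spanRank ≤ #s := by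
  classical
  induction s using Finset.induction_on generalizing N with
  | empty =>
    have hbot : N = ⊥ := eq_bot_iff.2 fun x hx => (mem_bot R).2 (funext fun i => hN x hx i
      (notMem_empty i))
    simp [hbot, spanRank_eq_zero_iff_eq_bot]
  | insert a s ha ih =>
    let f : (ι → R) →ₗ[R] R := LinearMap.proj a
    obtain ⟨g, hg⟩ := IsPrincipalIdealRing.principal (N.map f)
    obtain ⟨v, hvN, hvg⟩ : g ∈ N.map f := hg ▸ mem_span_singleton_self g
    have hN' : N = N ⊓ LinearMap.ker f ⊔ span R {v} := by
      refine eq_inf_ker_sup_of_map_le f ((span_singleton_le_iff_mem v N).2 hvN) ?_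
      rw [map_span, Set.image_singleton, hvg, ← hg]
    have hker : (N ⊓ LinearMap.ker f).spanRank ≤ #s := ih fun x ⟨hxN, hxa⟩ i hi => by
      by_cases hia : i = a
      · exact hia ▸ hxa
      · exact hN x hxN i (by simp [hia, hi])
    calc N.spanRank = (N ⊓ LinearMap.ker f ⊔ span R {v}).spanRank := congrArg spanRank hN'
      _ ≤ (N ⊓ LinearMap.ker f).spanRank + (span R {v}).spanRank := spanRank_sup_le_sum_spanRank
      _ ≤ #s + 1 := add_le_add hker ((spanRank_span_le_card _).trans (by simp))
      _ = #(insert a s) := by rw [card_insert_of_notMem ha]; push_cast; rfl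

theorem spanRank_le_card {ι : Type*} [Fintype ι] [IsPrincipalIdealRing R]
    (N : Submodule R (ι → R)) : N.spanRank ≤ Fintype.card ι :=
  spanRank_le_card_of_forall_notMem_eq_zero univ fun _ _ i hi => absurd (mem_univ i) hi

theorem spanRank_le_of_forall_hammingNorm_le {ι : Type*} [Fintype ι] [DecidableEq R]
    [IsPrincipalIdealRing R] {C : Submodule R (ι → R)} {c : ι → R}
    (hc : ∀ x ∈ C, x ≠ 0 → hammingNorm c ≤ hammingNorm x) :
    C.spanRank ≤ (Fintype.card ι + 1 - hammingNorm c : ℕ) := by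
  classical
  have hcι : hammingNorm c ≤ Fintype.card ι := hammingNorm_le_card_fintype
  obtain ⟨T, -, hT⟩ := exists_subset_card_eq (s := (univ : Finset ι)) (n := hammingNorm c - 1)
    (by rw [card_univ]; omega)
  let π : (ι → R) →ₗ[R] ({i // i ∉ T} → R) := LinearMap.funLeft R R Subtype.val
  have hdisj : Disjoint C (LinearMap.ker π) := by
    refine disjoint_def.2 fun x hxC hxπ => by_contra fun hx0 => ?_
    have hxT : hammingNorm x ≤ #T := card_le_card fun i hi =>
      by_contra fun hiT => (mem_filter.1 hi).2 (congrFun hxπ ⟨i, hiT⟩)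
    have hcx := hc x hxC hx0
    have hx := hammingNorm_pos_iff.2 hx0
    omega
  rw [← spanRank_map_eq_of_injOn π (LinearMap.injOn_of_disjoint_ker le_rfl hdisj)]
  refine (spanRank_le_card _).trans (Nat.cast_le.2 ?_)
  rw [Fintype.card_subtype_compl, Fintype.card_coe, hT]
  omega

end Submodule

theorem codeRank_le_of_spanRank_le {p s n t : ℕ}
    {C : Submodule (ZMod (p ^ s)) (Fin n → ZMod (p ^ s))}
    (h : C.spanRank ≤ t) : codeRank p s n C ≤ t := by
  have hfg : C.FG := Submodule.spanRank_finite_iff_fg.1 (h.trans_lt Cardinal.natCast_lt_aleph0)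
  obtain ⟨S, hS, hspan⟩ := hfg.exists_span_finset_card_eq_spanFinrank
  calc codeRank p s n C ≤ #S := by unfold codeRank; exact Nat.sInf_le ⟨S, rfl, hspan⟩
    _ ≤ t := hS ▸ (hfg.spanRank_le_iff t).1 h

theorem exists_ne_zero_forall_hammingNorm_le {ι β : Type*} [Fintype ι] [Zero β] [DecidableEq β]
    {S : Set (ι → β)} (hS : ∃ x ∈ S, x ≠ 0) :
    ∃ c ∈ S, c ≠ 0 ∧ ∀ x ∈ S, x ≠ 0 → hammingNorm c ≤ hammingNorm x := by
  obtain ⟨c, ⟨hcS, hc⟩, hmin⟩ :=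
    exists_minimalFor_of_wellFoundedLT (fun x => x ∈ S ∧ x ≠ 0) hammingNorm hS
  exact ⟨c, hcS, hc, fun x hxS hx => (le_total _ _).elim (hmin ⟨hxS, hx⟩) id⟩

theorem join_support_lee_singleton_bound_general (p s n : ℕ) (hs : 0 < s)
    (C : Submodule (ZMod (p ^ s)) (Fin n → ZMod (p ^ s))) (hC : C ≠ ⊥)
    (K : ℕ) (hK : K = codeRank p s n C) :
    minLeeDist (p ^ s) n (C : Set (Fin n → ZMod (p ^ s))) ≤
      (p / 2) * p ^ (s - 1) * (n - K + 1) := by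
  obtain ⟨c₀, hc₀C, hc₀, hmin⟩ :=
    exists_ne_zero_forall_hammingNorm_le ((Submodule.ne_bot_iff C).1 hC)
  have hKc₀ : K ≤ n + 1 - hammingNorm c₀ := by
    simpa [hK] using
      codeRank_le_of_spanRank_le (Submodule.spanRank_le_of_forall_hammingNorm_le hmin)
  have hc₀n : hammingNorm c₀ ≤ n := by simpa using hammingNorm_le_card_fintype (x := c₀)
  obtain ⟨k, hk0, hkp⟩ :=
    exists_pow_nsmul_ne_zero_and_nsmul_eq_zero hc₀ (ZModModule.char_nsmul_eq_zero (p ^ s) c₀)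
  have hps : p ^ s = p * p ^ (s - 1) := by rw [← pow_succ', Nat.sub_add_cancel hs]
  calc minLeeDist (p ^ s) n C ≤ leeWtVec (p ^ s) n (p ^ k • c₀) :=
        Nat.sInf_le ⟨_, C.smul_of_tower_mem _ hc₀C, hk0, rfl⟩
    _ ≤ hammingNorm (p ^ k • c₀) * (p / 2 * p ^ (s - 1)) :=
        leeWtVec_le_hammingNorm_mul fun i => leeWt_le_of_nsmul_eq_zero hps (congrFun hkp i)
    _ ≤ hammingNorm c₀ * (p / 2 * p ^ (s - 1)) :=
        Nat.mul_le_mul_right _ hammingNorm_smul_le_hammingNorm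
    _ ≤ (n - K + 1) * (p / 2 * p ^ (s - 1)) := Nat.mul_le_mul_right _ (by omega)
    _ = p / 2 * p ^ (s - 1) * (n - K + 1) := mul_comm _ _

theorem join_support_lee_singleton_bound (p s n : ℕ) (hp : p.Prime) (hs : 0 < s) (hn : 0 < n)
    (C : Submodule (ZMod (p ^ s)) (Fin n → ZMod (p ^ s))) (hC : C ≠ ⊥)
    (hnd : ∀ j : Fin n, ∃ c ∈ C, c j ≠ 0) (K : ℕ) (hK : K = codeRank p s n C) :
    minLeeDist (p ^ s) n (C : Set (Fin n → ZMod (p ^ s))) ≤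
      (p / 2) * p ^ (s - 1) * (n - K + 1) :=
  join_support_lee_singleton_bound_general p s n hs C hC K hK
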